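/- Let T be a Steiner triple system on a finite set V with |V| = n > 1, and suppose that every spreading set U of T satisfies 2^{|U|} ≥ n + 1 (i.e., the smallest spreading set has size log₂(n+1)). Then there exist d ≥ 0 with n = 2^{d+1} − 1 and a bijection φ from V onto the nonzero vectors of (ZMod 2)^{d+1} such that a 3-element subset {x, y, z} of V is a triple of T if and only if φ(x) + φ(y) + φ(z) = 0; that is, T is isomorphic to the projective space PG(d,2). -/

import Mathlib

/-- A Steiner triple system on `V`: a family `T` of 3-element `Finset`s such that
every pair of distinct points lies in exactly one member of `T`. -/
def IsSTS {V : Type*} (T : Set (Finset V)) : Prop :=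
  (∀ t ∈ T, t.card = 3) ∧
    ∀ x y : V, x ≠ y → ∃! t : Finset V, t ∈ T ∧ x ∈ t ∧ y ∈ t

/-- `W` is closed w.r.t. the triple system `T`: whenever a triple of `T` contains two
points of `W`, all (in particular the third) of its points lie in `W`. -/
def StsClosed {V : Type*} (T : Set (Finset V)) (W : Set V) : Prop :=
  ∀ t ∈ T, ∀ x ∈ t, ∀ y ∈ t, x ≠ y → x ∈ W → y ∈ W → ∀ z ∈ t, z ∈ W

/-- The closure of `S` w.r.t. `T`: the smallest closed set containing `S`. -/
def stsCl {V : Type*} (T : Set (Finset V)) (S : Set V) : Set V :=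
  ⋂₀ {W : Set V | S ⊆ W ∧ StsClosed T W}

/-- `S` is a spreading set: its closure is the whole point set. -/
def IsSpreading {V : Type*} (T : Set (Finset V)) (S : Set V) : Prop :=
  stsCl T S = Set.univ

/-- `S` is a minimal spreading set: it is spreading but no proper subset is. -/
def IsMinSpreading {V : Type*} (T : Set (Finset V)) (S : Set V) : Prop :=
  IsSpreading T S ∧ ∀ S' : Set V, S' ⊂ S → ¬ IsSpreading T S'


/-!
Write `xy` for the third point of the triple through `x ≠ y`, and adjoin a zero with
`x + x = 0` and `x + y = xy`. This is an abelian group of exponent two once it is associative,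
hence `(ZMod 2)^(d+1)` with the points as its nonzero vectors.

Associativity comes from counting. If `W` is closed and `x ∉ W`, then `cl (W ∪ {x})` contains
the `2|W| + 1` distinct points `x`, `W` and `xW`, so adding a point at least doubles
`|cl S| + 1`. Growing any `S` into a spreading set and comparing with the hypothesis gives
`|cl S| + 1 ≤ 2^|S|`. For three points not on a triple, `cl {a, b, c}` is therefore exactly
`a, b, ab, c, ca, cb, c(ab)`, and the only place left for `a(bc)` is `c(ab)`.
-/

open Finset

section

variable {V : Type*} {T : Set (Finset V)}

section Closure

theorem subset_stsCl (S : Set V) : S ⊆ stsCl T S :=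
  fun _ hx => Set.mem_sInter.2 fun _ hW => hW.1 hx

theorem stsClosed_stsCl (S : Set V) : StsClosed T (stsCl T S) :=
  fun t ht x hx y hy hxy hxS hyS z hz =>
    Set.mem_sInter.2 fun W hW => hW.2 t ht x hx y hy hxy (hxS W hW) (hyS W hW) z hz

theorem stsCl_subset_of_stsClosed {S W : Set V} (hSW : S ⊆ W) (hW : StsClosed T W) :
    stsCl T S ⊆ W :=
  Set.sInter_subset_of_mem ⟨hSW, hW⟩

theorem stsCl_mono {S S' : Set V} (h : S ⊆ S') : stsCl T S ⊆ stsCl T S' :=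
  stsCl_subset_of_stsClosed (h.trans (subset_stsCl S')) (stsClosed_stsCl S')

theorem stsCl_insert_stsCl (x : V) (S : Set V) :
    stsCl T (insert x (stsCl T S)) = stsCl T (insert x S) :=
  (stsCl_subset_of_stsClosed
      (Set.insert_subset (subset_stsCl _ (Set.mem_insert x S))
        (stsCl_mono (Set.subset_insert x S)))
      (stsClosed_stsCl _)).antisymm
    (stsCl_mono (Set.insert_subset_insert (subset_stsCl S)))

end Closure

namespace IsSTS

variable (hT : IsSTS T)
include hT

theorem eq_of_mem {t t' : Finset V} {x y : V} (hxy : x ≠ y) (ht : t ∈ T) (hxt : x ∈ t)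
    (hyt : y ∈ t) (ht' : t' ∈ T) (hxt' : x ∈ t') (hyt' : y ∈ t') : t = t' :=
  (hT.2 x y hxy).unique ⟨ht, hxt, hyt⟩ ⟨ht', hxt', hyt'⟩

variable [DecidableEq V]

theorem exists_third {x y : V} (hxy : x ≠ y) :
    ∃ z, z ≠ x ∧ z ≠ y ∧ ({x, y, z} : Finset V) ∈ T := by
  obtain ⟨t, ⟨ht, hx, hy⟩, -⟩ := hT.2 x y hxy
  have hcard : #t = 3 := hT.1 t ht
  obtain ⟨z, hz⟩ : ((t.erase x).erase y).Nonempty := by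
    rw [← card_pos, card_erase_of_mem (mem_erase.2 ⟨hxy.symm, hy⟩), card_erase_of_mem hx, hcard]
    decide
  obtain ⟨hzy, hzx, hz⟩ : z ≠ y ∧ z ≠ x ∧ z ∈ t := by simpa using hz
  have h3 : #{x, y, z} = 3 := card_eq_three.2 ⟨x, y, z, hxy, hzx.symm, hzy.symm, rfl⟩
  have hxyz : {x, y, z} = t :=
    eq_of_subset_of_card_le (by simp [insert_subset_iff, hx, hy, hz]) (by rw [hcard, h3])
  exact ⟨z, hzx, hzy, hxyz ▸ ht⟩

/-- The junk value `third x x = x` makes the quasigroup laws below hold without distinctness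
hypotheses. -/
noncomputable def third (x y : V) : V :=
  if h : x = y then x else (hT.exists_third h).choose

theorem third_self (x : V) : hT.third x x = x := dif_pos rfl

theorem third_spec {x y : V} (hxy : x ≠ y) :
    hT.third x y ≠ x ∧ hT.third x y ≠ y ∧ ({x, y, hT.third x y} : Finset V) ∈ T := by
  rw [third, dif_neg hxy]
  exact (hT.exists_third hxy).choose_spec

theorem mem_iff_third_eq {x y z : V} (hxy : x ≠ y) :
    ({x, y, z} : Finset V) ∈ T ↔ hT.third x y = z := by
  obtain ⟨hx, hy, hmem⟩ := hT.third_spec hxy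
  refine ⟨fun h => ?_, fun h => h ▸ hmem⟩
  have : hT.third x y ∈ ({x, y, z} : Finset V) := by
    rw [← hT.eq_of_mem hxy hmem (by simp) (by simp) h (by simp) (by simp)]
    simp
  simpa [hx, hy] using this

theorem third_comm (x y : V) : hT.third x y = hT.third y x := by
  rcases eq_or_ne x y with rfl | hxy
  · rfl
  exact (hT.mem_iff_third_eq hxy).1 (by rw [insert_comm]; exact (hT.third_spec hxy.symm).2.2)

theorem third_third (x y : V) : hT.third x (hT.third x y) = y := by
  rcases eq_or_ne x y with rfl | hxy
  · rw [hT.third_self, hT.third_self]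
  obtain ⟨hne, -, hmem⟩ := hT.third_spec hxy
  exact (hT.mem_iff_third_eq hne.symm).1 (by rwa [pair_comm])

theorem third_eq_iff (x y z : V) : hT.third x y = z ↔ y = hT.third x z :=
  ⟨fun h => h ▸ (hT.third_third x y).symm, fun h => h ▸ hT.third_third x z⟩

theorem third_injective (x : V) : Function.Injective (hT.third x) :=
  Function.LeftInverse.injective (hT.third_third x)

theorem third_mem_of_stsClosed {W : Set V} (hW : StsClosed T W) {x y : V} (hx : x ∈ W)
    (hy : y ∈ W) : hT.third x y ∈ W := by
  rcases eq_or_ne x y with rfl | hxy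
  · rwa [hT.third_self]
  exact hW _ (hT.third_spec hxy).2.2 x (by simp) y (by simp) hxy hx hy _ (by simp)

theorem stsClosed_triple {x y : V} (hxy : x ≠ y) :
    StsClosed T ↑({x, y, hT.third x y} : Finset V) := by
  intro t ht u hu v hv huv huW hvW z hz
  rwa [hT.eq_of_mem huv ht hu hv (hT.third_spec hxy).2.2 huW hvW] at hz

theorem stsCl_pair {x y : V} (hxy : x ≠ y) :
    stsCl T ↑({x, y} : Finset V) = ↑({x, y, hT.third x y} : Finset V) := by
  refine (stsCl_subset_of_stsClosed ?_ (hT.stsClosed_triple hxy)).antisymm ?_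
  · simp [Set.insert_subset_iff]
  have hx : x ∈ stsCl T ↑({x, y} : Finset V) := subset_stsCl _ (by simp)
  have hy : y ∈ stsCl T ↑({x, y} : Finset V) := subset_stsCl _ (by simp)
  have hxy' := hT.third_mem_of_stsClosed (stsClosed_stsCl _) hx hy
  simp only [coe_insert, coe_singleton, Set.insert_subset_iff, Set.singleton_subset_iff] at hx hy hxy' ⊢
  exact ⟨hx, hy, hxy'⟩

theorem ncard_insert_union_image [Finite V] {W : Set V} (hW : StsClosed T W) {x : V}
    (hx : x ∉ W) : (insert x (W ∪ hT.third x '' W)).ncard = 2 * W.ncard + 1 := by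
  have hdisj : Disjoint W (hT.third x '' W) := by
    rw [Set.disjoint_right]
    rintro _ ⟨w, hw, rfl⟩ hxw
    refine hx ?_
    rw [← hT.third_third w x, hT.third_comm w x]
    exact hT.third_mem_of_stsClosed hW hw hxw
  have hxW : x ∉ W ∪ hT.third x '' W := by
    rintro (hxW | ⟨w, hw, hxw⟩)
    · exact hx hxW
    · exact hx (hT.third_injective x (hxw.trans (hT.third_self x).symm) ▸ hw)
  rw [Set.ncard_insert_of_notMem hxW, Set.ncard_union_eq hdisj,
    (hT.third_injective x).injOn.ncard_image]
  ring

theorem insert_union_image_subset_stsCl (x : V) (W : Set V) :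
    insert x (W ∪ hT.third x '' W) ⊆ stsCl T (insert x W) := by
  have hx : x ∈ stsCl T (insert x W) := subset_stsCl _ (Set.mem_insert x W)
  have hW : W ⊆ stsCl T (insert x W) := (Set.subset_insert x W).trans (subset_stsCl _)
  refine Set.insert_subset hx (Set.union_subset hW ?_)
  rintro _ ⟨w, hw, rfl⟩
  exact hT.third_mem_of_stsClosed (stsClosed_stsCl _) hx (hW hw)

theorem two_mul_ncard_stsCl_add_one_le [Finite V] {S : Set V} {x : V} (hx : x ∉ stsCl T S) :
    2 * (stsCl T S).ncard + 1 ≤ (stsCl T (insert x S)).ncard := by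
  rw [← hT.ncard_insert_union_image (stsClosed_stsCl S) hx, ← stsCl_insert_stsCl x S]
  exact Set.ncard_le_ncard (hT.insert_union_image_subset_stsCl x _)

theorem exists_spreading_superset [Fintype V] (S : Finset V) :
    ∃ Z : Finset V, S ⊆ Z ∧ IsSpreading T ↑Z ∧
      2 ^ #Z * ((stsCl T ↑S).ncard + 1) ≤ 2 ^ #S * (Fintype.card V + 1) := by
  induction hk : (stsCl T ↑S)ᶜ.ncard using Nat.strong_induction_on generalizing S with
  | _ k ih =>
  by_cases hS : IsSpreading T ↑S
  · refine ⟨S, subset_rfl, hS, ?_⟩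
    rw [hS, Set.ncard_univ, Nat.card_eq_fintype_card]
  obtain ⟨x, hx⟩ : ∃ x, x ∉ stsCl T ↑S := by
    simpa [IsSpreading, Set.eq_univ_iff_forall] using hS
  have hxS : x ∉ S := fun h => hx (subset_stsCl _ h)
  have hdouble := hT.two_mul_ncard_stsCl_add_one_le hx
  rw [← coe_insert] at hdouble
  have hlt : (stsCl T ↑(insert x S))ᶜ.ncard < k := by
    rw [← hk]
    refine Set.ncard_lt_ncard (compl_lt_compl_iff_lt.2 ⟨stsCl_mono (by simp), fun h => hx ?_⟩)
    exact h (subset_stsCl _ (by simp))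
  obtain ⟨Z, hSZ, hZ, hle⟩ := ih _ hlt (insert x S) rfl
  refine ⟨Z, (subset_insert x S).trans hSZ, hZ, Nat.le_of_mul_le_mul_left ?_ two_pos⟩
  rw [card_insert_of_notMem hxS, pow_succ] at hle
  calc 2 * (2 ^ #Z * ((stsCl T ↑S).ncard + 1))
      ≤ 2 ^ #Z * ((stsCl T ↑(insert x S)).ncard + 1) := by rw [mul_left_comm]; gcongr; omega
    _ ≤ 2 * (2 ^ #S * (Fintype.card V + 1)) := by linarith

noncomputable def optionAdd : Option V → Option V → Option V
  | none, y => y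
  | some x, none => some x
  | some x, some y => if x = y then none else some (hT.third x y)

@[simp] theorem none_optionAdd (y : Option V) : hT.optionAdd none y = y := rfl

@[simp] theorem optionAdd_none (x : Option V) : hT.optionAdd x none = x := by
  cases x <;> rfl

@[simp] theorem optionAdd_self (x : Option V) : hT.optionAdd x x = none := by
  cases x <;> simp [optionAdd]

theorem some_optionAdd_some {x y : V} (hxy : x ≠ y) :
    hT.optionAdd (some x) (some y) = some (hT.third x y) :=
  if_neg hxy

theorem some_optionAdd_some_optionAdd_some_eq_none_iff {x y z : V} (hxy : x ≠ y) :
    hT.optionAdd (hT.optionAdd (some x) (some y)) (some z) = none ↔ hT.third x y = z := by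
  rw [hT.some_optionAdd_some hxy]
  simp [optionAdd]

theorem optionAdd_comm (x y : Option V) : hT.optionAdd x y = hT.optionAdd y x := by
  rcases x with _ | a <;> rcases y with _ | b
  · rfl
  · rfl
  · rfl
  rcases eq_or_ne a b with rfl | hab
  · rfl
  rw [hT.some_optionAdd_some hab, hT.some_optionAdd_some hab.symm, hT.third_comm]

section Large

variable [Fintype V] (hU : ∀ U : Finset V, IsSpreading T ↑U → Fintype.card V + 1 ≤ 2 ^ #U)
include hU

theorem ncard_stsCl_add_one_le (S : Finset V) : (stsCl T ↑S).ncard + 1 ≤ 2 ^ #S := by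
  obtain ⟨Z, -, hZ, hle⟩ := hT.exists_spreading_superset S
  refine Nat.le_of_mul_le_mul_left ?_ (pow_pos two_pos #Z)
  calc 2 ^ #Z * ((stsCl T ↑S).ncard + 1) ≤ 2 ^ #S * (Fintype.card V + 1) := hle
    _ ≤ 2 ^ #S * 2 ^ #Z := Nat.mul_le_mul_left _ (hU Z hZ)
    _ = 2 ^ #Z * 2 ^ #S := mul_comm _ _

theorem stsCl_insert_eq {S : Finset V} (hS : (stsCl T ↑S).ncard + 1 = 2 ^ #S) {x : V}
    (hx : x ∉ stsCl T ↑S) :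
    stsCl T ↑(insert x S) = insert x (stsCl T ↑S ∪ hT.third x '' stsCl T ↑S) := by
  have hsub := hT.insert_union_image_subset_stsCl x (stsCl T ↑S)
  rw [stsCl_insert_stsCl, ← coe_insert] at hsub
  refine (Set.eq_of_subset_of_ncard_le hsub ?_).symm
  have hle := hT.ncard_stsCl_add_one_le hU (insert x S)
  rw [card_insert_of_notMem (fun h => hx (subset_stsCl _ h)), pow_succ] at hle
  rw [hT.ncard_insert_union_image (stsClosed_stsCl _) hx]
  omega

theorem stsCl_insert_pair {a b c : V} (hab : a ≠ b)
    (hc : c ∉ ({a, b, hT.third a b} : Finset V)) :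
    stsCl T ↑({c, a, b} : Finset V) =
      {c, a, b, hT.third a b, hT.third c a, hT.third c b, hT.third c (hT.third a b)} := by
  have hpair := hT.stsCl_pair hab
  obtain ⟨hab_a, hab_b, -⟩ := hT.third_spec hab
  have hind : (stsCl T ↑({a, b} : Finset V)).ncard + 1 = 2 ^ #{a, b} := by
    rw [hpair, Set.ncard_coe_finset, card_pair hab,
      card_eq_three.2 ⟨a, b, _, hab, hab_a.symm, hab_b.symm, rfl⟩]
    rfl
  rw [hT.stsCl_insert_eq hU hind (by rwa [hpair, mem_coe]), hpair]
  ext p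
  simp [or_assoc, eq_comm (b := p)]

theorem third_third_assoc {a b c : V} (hab : a ≠ b) (hbc : b ≠ c) (hac : a ≠ c)
    (hc : c ≠ hT.third a b) :
    hT.third a (hT.third b c) = hT.third (hT.third a b) c := by
  have hmem : hT.third a (hT.third b c) ∈ stsCl T ↑({c, a, b} : Finset V) := by
    have hcl := stsClosed_stsCl (T := T) ↑({c, a, b} : Finset V)
    refine hT.third_mem_of_stsClosed hcl (subset_stsCl _ (by simp)) ?_
    exact hT.third_mem_of_stsClosed hcl (subset_stsCl _ (by simp)) (subset_stsCl _ (by simp))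
  rw [hT.stsCl_insert_pair hU hab (by simp [hac.symm, hbc.symm, hc])] at hmem
  have hbc_a : hT.third b c ≠ a := by
    rw [Ne, hT.third_eq_iff, hT.third_comm b]
    exact hc
  -- every candidate but the last forces a coincidence among `a`, `b`, `c` and `ab`
  rcases hmem with h | h | h | h | h | h | h
  · rw [hT.third_eq_iff, hT.third_comm b, hT.third_comm a] at h
    exact (hab (hT.third_injective c h).symm).elim
  · rw [hT.third_eq_iff, hT.third_self] at h
    exact (hbc_a h).elim
  · rw [hT.third_eq_iff, hT.third_comm a] at h
    exact (hac (hT.third_injective b h).symm).elim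
  · have h' := hT.third_injective a h
    rw [hT.third_eq_iff, hT.third_self] at h'
    exact (hbc h'.symm).elim
  · rw [hT.third_comm c] at h
    have h' := hT.third_injective a h
    rw [hT.third_comm, hT.third_eq_iff, hT.third_self] at h'
    exact (hbc h').elim
  · rw [hT.third_comm c, hT.third_comm a, hT.third_eq_iff, hT.third_self] at h
    exact (hbc_a h.symm).elim
  · rw [h, hT.third_comm]

theorem optionAdd_assoc (x y z : Option V) :
    hT.optionAdd (hT.optionAdd x y) z = hT.optionAdd x (hT.optionAdd y z) := by
  rcases x with _ | a
  · rfl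
  rcases y with _ | b
  · simp
  rcases z with _ | c
  · simp
  rcases eq_or_ne a b with rfl | hab
  · rcases eq_or_ne a c with rfl | hac
    · simp
    rw [hT.optionAdd_self, hT.none_optionAdd, hT.some_optionAdd_some hac,
      hT.some_optionAdd_some (hT.third_spec hac).1.symm, hT.third_third]
  rcases eq_or_ne b c with rfl | hbc
  · rw [hT.optionAdd_self, hT.optionAdd_none, hT.some_optionAdd_some hab,
      hT.some_optionAdd_some (hT.third_spec hab).2.1, hT.third_comm, hT.third_comm a,
      hT.third_third]
  rcases eq_or_ne c (hT.third a b) with rfl | hc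
  · rw [hT.some_optionAdd_some hab, hT.optionAdd_self, hT.some_optionAdd_some hbc,
      hT.third_comm a b, hT.third_third, hT.optionAdd_self]
  rcases eq_or_ne a c with rfl | hac
  · rw [hT.optionAdd_comm, hT.optionAdd_comm (some b)]
  have ha_bc : a ≠ hT.third b c := by
    rw [Ne, eq_comm, hT.third_eq_iff, hT.third_comm b]
    exact hc
  rw [hT.some_optionAdd_some hab, hT.some_optionAdd_some hbc, hT.some_optionAdd_some hc.symm,
    hT.some_optionAdd_some ha_bc, hT.third_third_assoc hU hab hbc hac hc]

noncomputable abbrev optionAddCommGroup : AddCommGroup (Option V) :=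
  letI : Add (Option V) := ⟨hT.optionAdd⟩
  letI : Zero (Option V) := ⟨none⟩
  letI : Neg (Option V) := ⟨id⟩
  { add_assoc := hT.optionAdd_assoc hU
    zero_add := hT.none_optionAdd
    add_zero := hT.optionAdd_none
    neg_add_cancel := hT.optionAdd_self
    add_comm := hT.optionAdd_comm
    nsmul := nsmulRec
    zsmul := zsmulRec }

end Large

end IsSTS

end

theorem exists_addEquiv_fin_zmod_two (G : Type*) [AddCommGroup G] [Finite G]
    (hG : ∀ x : G, x + x = 0) : ∃ k : ℕ, Nonempty (G ≃+ (Fin k → ZMod 2)) := by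
  let _ : Module (ZMod 2) G := AddCommGroup.zmodModule fun x => by rw [two_nsmul, hG]
  exact ⟨_, ⟨(Module.finBasis (ZMod 2) G).equivFun.toAddEquiv⟩⟩

/-- If every spreading set `U` of a Steiner triple system on `n > 1` points satisfies
`2 ^ |U| ≥ n + 1` (i.e. the smallest spreading set has size `log₂ (n + 1)`), then the
system is isomorphic to `PG(d,2)` for some `d`: there is a bijection `φ` of the point
set with the nonzero vectors of `(ZMod 2)^(d+1)` (so `n = 2^(d+1) - 1`) carrying the
triples exactly to the 3-element sets of nonzero vectors summing to zero. -/
theorem sts_isomorphic_pg_of_min_spreading_large {V : Type*} [Fintype V]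
    [DecidableEq V] (T : Set (Finset V)) (hT : IsSTS T) (hn : 1 < Fintype.card V)
    (h : ∀ U : Finset V, IsSpreading T ↑U → Fintype.card V + 1 ≤ 2 ^ U.card) :
    ∃ (d : ℕ) (φ : V ≃ {x : Fin (d + 1) → ZMod 2 // x ≠ 0}),
      Fintype.card V = 2 ^ (d + 1) - 1 ∧
      ∀ x y z : V, x ≠ y → y ≠ z → x ≠ z →
        (({x, y, z} : Finset V) ∈ T ↔
          (φ x : Fin (d + 1) → ZMod 2) + (φ y : Fin (d + 1) → ZMod 2)
            + (φ z : Fin (d + 1) → ZMod 2) = 0) := by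
  let _ : AddCommGroup (Option V) := hT.optionAddCommGroup h
  obtain ⟨k, ⟨e⟩⟩ := exists_addEquiv_fin_zmod_two (Option V) hT.optionAdd_self
  have hcard : Fintype.card V + 1 = 2 ^ k := by
    rw [← Fintype.card_option, Fintype.card_congr e.toEquiv, Fintype.card_fun, ZMod.card,
      Fintype.card_fin]
  obtain ⟨d, rfl⟩ : ∃ d, k = d + 1 := Nat.exists_eq_succ_of_ne_zero (by rintro rfl; omega)
  refine ⟨d, Equiv.optionSubtype 0 ⟨e.toEquiv, map_zero e⟩, by omega,
    fun x y z hxy _ _ => ?_⟩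
  change _ ↔ e (some x) + e (some y) + e (some z) = 0
  rw [← map_add, ← map_add, e.map_eq_zero_iff, hT.mem_iff_third_eq hxy]
  exact (hT.some_optionAdd_some_optionAdd_some_eq_none_iff hxy).symm
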